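/- Let k be a field and G a group. The map from G to the group of monoidal natural automorphisms of the forgetful functor Rep k G ⥤ ModuleCat k, sending g ∈ G to the natural automorphism whose component at a representation (V, ρ) is the linear automorphism ρ(g) of V, is a group isomorphism. -/

import Mathlib

/-!
A natural endomorphism `α` of the forgetful functor is determined by the single element
`α(1) ∈ k[G]` of the regular representation: every vector `v` of a representation `V` is the image
of `1` under the `G`-map `k[G] → V, x ↦ x • v`, so `α_V v = α(1) • v`. The comultiplication
`g ↦ g ⊗ g` and the counit of `k[G]` are `G`-equivariant, so when `α` is monoidal, naturality
at them says that `α(1)` is group-like; over a domain the group-like elements of `k[G]` are exactly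
the elements of `G`. Hence `g ↦ ρ(g)` identifies `G` with the monoid of monoidal endomorphisms of
the forgetful functor, and its units with the automorphisms.
-/

open CategoryTheory MonoidalCategory
open scoped MonoidAlgebra

noncomputable section

universe u

namespace Action

variable {k : Type u} [CommRing k] {G : Type u} [Monoid G]

variable (k G) in
def forgetEndHom : G →* End (LaxMonoidalFunctor.of (Action.forget (ModuleCat.{u} k) G)) where
  toFun g := ⟨{ app V := V.ρ g, naturality _ _ f := (f.comm g).symm }, ⟨rfl, fun _ _ => rfl⟩⟩
  map_one' := LaxMonoidalFunctor.hom_ext <| NatTrans.ext <| funext fun V => V.ρ.map_one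
  map_mul' g h := LaxMonoidalFunctor.hom_ext <| NatTrans.ext <| funext fun V => V.ρ.map_mul g h

variable (k G) in
def regular : Action (ModuleCat.{u} k) G where
  V := ModuleCat.of k k[G]
  ρ := (ModuleCat.endRingEquiv _).symm.toMonoidHom.comp
    ((Algebra.lmul k k[G]).toMonoidHom.comp (MonoidAlgebra.of k G))

abbrev toRepresentation (V : Action (ModuleCat.{u} k) G) : Representation k G V.V :=
  (ModuleCat.endRingEquiv V.V).toMonoidHom.comp V.ρ

def regularLift (V : Action (ModuleCat.{u} k) G) (v : V.V) : regular k G ⟶ V where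
  hom := ModuleCat.ofHom <| LinearMap.applyₗ v ∘ₗ V.toRepresentation.asAlgebraHom.toLinearMap
  comm g := by
    ext (x : k[G])
    change V.toRepresentation.asAlgebraHom (MonoidAlgebra.of k G g * x) v =
      (V.ρ g).hom (V.toRepresentation.asAlgebraHom x v)
    rw [map_mul, Module.End.mul_apply, Representation.asAlgebraHom_of]
    rfl

lemma regularLift_of (V : Action (ModuleCat.{u} k) G) (v : V.V) (g : G) :
    (regularLift V v).hom.hom (MonoidAlgebra.of k G g) = (V.ρ g).hom v :=
  congrArg (· v) (V.toRepresentation.asAlgebraHom_of g)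

lemma regularLift_one (V : Action (ModuleCat.{u} k) G) (v : V.V) :
    (regularLift V v).hom.hom (1 : k[G]) = v := by
  simpa [MonoidAlgebra.one_def] using regularLift_of V v 1

def evalRegularOne
    (α : Action.forget (ModuleCat.{u} k) G ⟶ Action.forget (ModuleCat.{u} k) G) : k[G] :=
  (α.app (regular k G)).hom (1 : k[G])

lemma forget_natTrans_app_apply
    (α : Action.forget (ModuleCat.{u} k) G ⟶ Action.forget (ModuleCat.{u} k) G)
    (V : Action (ModuleCat.{u} k) G) (v : V.V) :
    (α.app V).hom v = (regularLift V v).hom.hom (evalRegularOne α) := by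
  have h : (α.app V).hom ((regularLift V v).hom.hom (1 : k[G])) =
      (regularLift V v).hom.hom (evalRegularOne α) :=
    congr(($(α.naturality (regularLift V v))).hom (1 : k[G]))
  rwa [regularLift_one] at h

lemma forget_natTrans_ext
    {α β : Action.forget (ModuleCat.{u} k) G ⟶ Action.forget (ModuleCat.{u} k) G}
    (h : evalRegularOne α = evalRegularOne β) : α = β := by
  ext V v
  rw [forget_natTrans_app_apply α V v, h]
  exact (forget_natTrans_app_apply β V v).symm

lemma evalRegularOne_forgetEndHom (g : G) :
    evalRegularOne (forgetEndHom k G g).hom = MonoidAlgebra.of k G g :=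
  mul_one _

lemma forgetEndHom_injective [Nontrivial k] : Function.Injective (forgetEndHom k G) :=
  fun g h hgh => MonoidAlgebra.of_injective <| by
    rw [← evalRegularOne_forgetEndHom (k := k), hgh, evalRegularOne_forgetEndHom]

variable (k G) in
def regularComul : regular k G ⟶ regular k G ⊗ regular k G where
  hom := ModuleCat.ofHom (Coalgebra.comul (R := k) (A := k[G]))
  comm g := ModuleCat.hom_ext <| LinearMap.ext fun (x : k[G]) => by
    change Coalgebra.comul (MonoidAlgebra.of k G g * x) = TensorProduct.map
      (LinearMap.mulLeft k (MonoidAlgebra.of k G g)) (LinearMap.mulLeft k (MonoidAlgebra.of k G g))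
      (Coalgebra.comul x)
    rw [Bialgebra.comul_mul, (MonoidAlgebra.isGroupLikeElem_of g).comul_eq_tmul_self,
      ← LinearMap.mulLeft_tmul, LinearMap.mulLeft_apply]

variable (k G) in
def regularCounit : regular k G ⟶ 𝟙_ _ where
  hom := ModuleCat.ofHom (Coalgebra.counit (R := k) (A := k[G]))
  comm g := ModuleCat.hom_ext <| LinearMap.ext fun (x : k[G]) => by
    change Coalgebra.counit (MonoidAlgebra.of k G g * x) = Coalgebra.counit (R := k) x
    rw [Bialgebra.counit_mul, (MonoidAlgebra.isGroupLikeElem_of g).counit_eq_one, one_mul]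

lemma isGroupLikeElem_evalRegularOne
    (α : Action.forget (ModuleCat.{u} k) G ⟶ Action.forget (ModuleCat.{u} k) G)
    (hunit : α.app (𝟙_ _) = 𝟙 _)
    (htensor : α.app (regular k G ⊗ regular k G) = α.app (regular k G) ⊗ₘ α.app (regular k G)) :
    IsGroupLikeElem k (evalRegularOne α) where
  counit_eq_one := by
    have h := congr(($(α.naturality (regularCounit k G))).hom (1 : k[G]))
    rw [hunit] at h
    change Coalgebra.counit (R := k) (1 : k[G]) = Coalgebra.counit (evalRegularOne α) at h
    rw [← h, Bialgebra.counit_one]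
  comul_eq_tmul_self := by
    have h := congr(($(α.naturality (regularComul k G))).hom (1 : k[G]))
    rw [htensor] at h
    change TensorProduct.map (α.app (regular k G)).hom (α.app (regular k G)).hom
      (Coalgebra.comul (R := k) (A := k[G]) 1) = Coalgebra.comul (R := k) (evalRegularOne α) at h
    rw [← h, Bialgebra.comul_one, Algebra.TensorProduct.one_def]
    rfl

section Monoidal

variable (α : LaxMonoidalFunctor.of (Action.forget (ModuleCat.{u} k) G) ⟶
  LaxMonoidalFunctor.of (Action.forget (ModuleCat.{u} k) G))

lemma app_tensorUnit_of_isMonoidal : α.hom.app (𝟙_ _) = 𝟙 _ :=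
  (Category.id_comp _).symm.trans α.isMonoidal.unit

lemma app_tensor_of_isMonoidal (X Y : Action (ModuleCat.{u} k) G) :
    α.hom.app (X ⊗ Y) = α.hom.app X ⊗ₘ α.hom.app Y :=
  (Category.id_comp _).symm.trans ((α.isMonoidal.tensor X Y).trans (Category.comp_id _))

end Monoidal

lemma forgetEndHom_surjective [IsDomain k] : Function.Surjective (forgetEndHom k G) := by
  intro α
  obtain ⟨g, hg⟩ := MonoidAlgebra.isGroupLikeElem_iff_mem_range_single_one.1 <|
    isGroupLikeElem_evalRegularOne α.hom (app_tensorUnit_of_isMonoidal α)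
      (app_tensor_of_isMonoidal α _ _)
  refine ⟨g, LaxMonoidalFunctor.hom_ext (forget_natTrans_ext ?_)⟩
  rw [evalRegularOne_forgetEndHom, ← hg]
  rfl

variable (k G) in
def forgetEndEquiv [IsDomain k] :
    G ≃* End (LaxMonoidalFunctor.of (Action.forget (ModuleCat.{u} k) G)) :=
  MulEquiv.ofBijective (forgetEndHom k G) ⟨forgetEndHom_injective, forgetEndHom_surjective⟩

end Action

theorem group_iso_monoidal_automorphisms_of_forget
    (k : Type u) [Field k] (G : Type u) [Group G] :
    ∃ φ : G ≃* Aut (LaxMonoidalFunctor.of (Action.forget (ModuleCat.{u} k) (MonCat.of G))),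
      ∀ (g : G) (V : Action (ModuleCat.{u} k) (MonCat.of G)), (φ g).hom.hom.app V = V.ρ g :=
  ⟨toUnits.trans <| (Units.mapEquiv (Action.forgetEndEquiv k G)).trans (Aut.unitsEndEquivAut _),
    fun _ _ => rfl⟩
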